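/- Let S be a measurable subset of the Euclidean plane with 0 < μ(S) < ∞, let a, b ∈ ℝ², and let r > 0 be such that the open r-thickening of the segment [a, b] is contained in S. Let N be a positive natural number and consider N obstacle centers drawn i.i.d. from the uniform probability distribution on S (the N-fold product of the normalized restriction of Lebesgue measure to S). Then the probability that every one of the N centers is at distance at least r from the segment [a, b] equals ((μ(S) − π r² − 2 r ‖a − b‖) / μ(S))^N. -/

import Mathlib

/-! Each center falls, independently, in the open `r`-thickening `T` of the segment with
probability `μ(T) / μ(S)`, so everything reduces to `μ(T) = πr² + 2rL` with `L = ‖a - b‖`.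
After an isometry the segment is `[0, L] × {0}`; a horizontal line at height `|y| < r` meets `T`
in an interval of length `L + 2√(r² - y²)`, which is `L` more than it meets the disc of radius
`r`. Integrating over `y` (Cavalieri) gives `μ(T) = μ(disc) + 2rL`. -/

open MeasureTheory Real Set Metric
open scoped ENNReal

/-- The open `r`-neighbourhood, for the Euclidean distance, of the segment `[0, L] × {0}`. -/
def stadium (r L : ℝ) : Set (ℝ × ℝ) := {p | ∃ s ∈ Icc 0 L, (p.1 - s) ^ 2 + p.2 ^ 2 < r ^ 2}

lemma isOpen_stadium (r L : ℝ) : IsOpen (stadium r L) := by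
  have : stadium r L = ⋃ s ∈ Icc 0 L, {p : ℝ × ℝ | (p.1 - s) ^ 2 + p.2 ^ 2 < r ^ 2} := by
    ext p; simp [stadium]
  rw [this]
  exact isOpen_biUnion fun s _ => isOpen_lt (by fun_prop) continuous_const

lemma exists_mem_Icc_abs_sub_lt_iff {L h : ℝ} (hL : 0 ≤ L) (x : ℝ) :
    (∃ s ∈ Icc 0 L, |x - s| < h) ↔ 0 < h ∧ x ∈ Ioo (-h) (L + h) := by
  constructor
  · rintro ⟨s, ⟨hs0, hsL⟩, hxs⟩
    obtain ⟨h₁, h₂⟩ := abs_lt.mp hxs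
    exact ⟨(abs_nonneg _).trans_lt hxs, by constructor <;> linarith⟩
  · rintro ⟨hh, hx₁, hx₂⟩
    refine ⟨max 0 (min x L), ⟨le_max_left _ _, max_le hL (min_le_right _ _)⟩, abs_lt.mpr ?_⟩
    constructor <;> rcases max_cases 0 (min x L) with h₀ | h₀ <;>
      rcases min_cases x L with h₁ | h₁ <;> linarith

lemma mem_stadium_iff {r L : ℝ} (hL : 0 ≤ L) (p : ℝ × ℝ) :
    p ∈ stadium r L ↔ 0 < √(r ^ 2 - p.2 ^ 2) ∧
      p.1 ∈ Ioo (-√(r ^ 2 - p.2 ^ 2)) (L + √(r ^ 2 - p.2 ^ 2)) := by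
  rw [← exists_mem_Icc_abs_sub_lt_iff hL]
  refine exists_congr fun s => and_congr_right fun _ => ?_
  rw [Real.lt_sqrt (abs_nonneg _), sq_abs, lt_sub_iff_add_lt]

lemma volume_stadium_slice {r L : ℝ} (hr : 0 < r) (hL : 0 ≤ L) (y : ℝ) :
    volume ((fun x => (x, y)) ⁻¹' stadium r L)
      = (Ioo (-r) r).indicator (fun y => ENNReal.ofReal (L + 2 * √(r ^ 2 - y ^ 2))) y := by
  have hy : 0 < √(r ^ 2 - y ^ 2) ↔ y ∈ Ioo (-r) r := by
    rw [Real.sqrt_pos, sub_pos, sq_lt_sq, abs_of_pos hr, abs_lt, mem_Ioo]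
  by_cases h : y ∈ Ioo (-r) r
  · have : (fun x => (x, y)) ⁻¹' stadium r L
        = Ioo (-√(r ^ 2 - y ^ 2)) (L + √(r ^ 2 - y ^ 2)) := by
      ext x; simp [mem_stadium_iff hL, hy.mpr h]
    rw [this, Real.volume_Ioo, indicator_of_mem h]
    ring_nf
  · have : (fun x => (x, y)) ⁻¹' stadium r L = ∅ := by
      ext x; simp [mem_stadium_iff hL, hy, h]
    rw [this, measure_empty, indicator_of_notMem h]

lemma volume_stadium_eq_setLIntegral {r L : ℝ} (hr : 0 < r) (hL : 0 ≤ L) :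
    volume (stadium r L) = ∫⁻ y in Ioo (-r) r, ENNReal.ofReal (L + 2 * √(r ^ 2 - y ^ 2)) := by
  rw [Measure.volume_eq_prod, Measure.prod_apply_symm (isOpen_stadium r L).measurableSet,
    ← lintegral_indicator measurableSet_Ioo]
  simp_rw [volume_stadium_slice hr hL]

lemma volume_stadium_eq_add {r L : ℝ} (hr : 0 < r) (hL : 0 ≤ L) :
    volume (stadium r L) = volume (stadium r 0) + ENNReal.ofReal (2 * r * L) := by
  have hsqrt : ∀ y, 0 ≤ 2 * √(r ^ 2 - y ^ 2) := fun y => by positivity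
  rw [volume_stadium_eq_setLIntegral hr hL, volume_stadium_eq_setLIntegral hr le_rfl]
  simp_rw [ENNReal.ofReal_add hL (hsqrt _), zero_add]
  rw [lintegral_add_left measurable_const, setLIntegral_const, Real.volume_Ioo, add_comm,
    ← ENNReal.ofReal_mul hL]
  ring_nf

section Plane

variable {E : Type*} [NormedAddCommGroup E] [InnerProductSpace ℝ E] [FiniteDimensional ℝ E]

lemma exists_orthonormalBasis_norm_smul_eq {ι : Type*} [Fintype ι]
    (hE : Module.finrank ℝ E = Fintype.card ι) (i : ι) (v : E) :
    ∃ B : OrthonormalBasis ι ℝ E, ‖v‖ • B i = v := by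
  by_cases hv : v = 0
  · exact ⟨(stdOrthonormalBasis ℝ E).reindex (Fintype.equivFinOfCardEq hE.symm).symm,
      by simp [hv]⟩
  have hu : Orthonormal ℝ (({i} : Set ι).domRestrict fun _ => ‖v‖⁻¹ • v) := by
    rw [orthonormal_subsingleton_iff]
    intro j
    rw [Set.domRestrict_apply, norm_smul, norm_inv, norm_norm,
      inv_mul_cancel₀ (norm_ne_zero_iff.mpr hv)]
  obtain ⟨B, hB⟩ := hu.exists_orthonormalBasis_extension_of_card_eq hE
  exact ⟨B, by rw [hB i rfl, smul_smul, mul_inv_cancel₀ (norm_ne_zero_iff.mpr hv), one_smul]⟩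

variable [MeasurableSpace E] [BorelSpace E]

lemma volume_thickening_segment_eq_volume_stadium (hE : Module.finrank ℝ E = 2) {r : ℝ}
    (hr : 0 ≤ r) (a b : E) :
    volume (thickening r (segment ℝ a b)) = volume (stadium r ‖b - a‖) := by
  obtain ⟨B, hB⟩ :=
    exists_orthonormalBasis_norm_smul_eq (ι := Fin 2) (by simpa using hE) 0 (b - a)
  set L := ‖b - a‖
  let Φ : E → ℝ × ℝ := fun x => (B.repr (x - a) 0, B.repr (x - a) 1)
  have hΦ : MeasurePreserving Φ volume volume :=
    (volume_preserving_finTwoArrow ℝ).comp ((PiLp.volume_preserving_ofLp (ι := Fin 2)).comp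
      (B.measurePreserving_repr.comp (measurePreserving_sub_right volume a)))
  have hdist : ∀ x (t : ℝ),
      dist x (a + t • (b - a)) ^ 2 = ((Φ x).1 - t * L) ^ 2 + (Φ x).2 ^ 2 := by
    intro x t
    rw [dist_eq_norm, ← B.repr.norm_map, EuclideanSpace.real_norm_sq_eq, Fin.sum_univ_two, ← hB]
    simp only [Φ, map_sub, map_add, map_smul, OrthonormalBasis.repr_self, PiLp.sub_apply,
      PiLp.add_apply, PiLp.smul_apply, PiLp.single_eq_same,
      PiLp.single_eq_of_ne _ (one_ne_zero : (1 : Fin 2) ≠ 0), smul_eq_mul, mul_one, mul_zero,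
      add_zero]
    ring
  have hpre : Φ ⁻¹' stadium r L = thickening r (segment ℝ a b) := by
    ext x
    simp only [mem_preimage, mem_thickening_iff, segment_eq_image', exists_mem_image]
    constructor
    · rintro ⟨s, ⟨hs0, hsL⟩, hs⟩
      refine ⟨s / L, ⟨by positivity, div_le_one_of_le₀ hsL (norm_nonneg _)⟩, ?_⟩
      rwa [← sq_lt_sq₀ dist_nonneg hr, hdist,
        div_mul_cancel_of_imp fun h => le_antisymm (hsL.trans h.le) hs0]
    · rintro ⟨t, ⟨ht0, ht1⟩, h⟩
      refine ⟨t * L, ⟨by positivity, mul_le_of_le_one_left (norm_nonneg _) ht1⟩, ?_⟩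
      rwa [← hdist, sq_lt_sq₀ dist_nonneg hr]
  rw [← hpre, hΦ.measure_preimage (isOpen_stadium r L).measurableSet.nullMeasurableSet]

lemma volume_stadium_zero (hE : Module.finrank ℝ E = 2) {r : ℝ} (hr : 0 ≤ r) :
    volume (stadium r 0) = ENNReal.ofReal (π * r ^ 2) := by
  have : Nontrivial E := Module.nontrivial_of_finrank_eq_succ hE
  have h := volume_thickening_segment_eq_volume_stadium hE hr (0 : E) 0
  rw [segment_same, thickening_singleton, sub_self, norm_zero,
    InnerProductSpace.volume_ball_of_dim_even (k := 1) hE] at h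
  rw [← h, hE, ← ENNReal.ofReal_pow hr, ← ENNReal.ofReal_mul (by positivity)]
  norm_num [mul_comm]

lemma volume_thickening_segment (hE : Module.finrank ℝ E = 2) {r : ℝ} (hr : 0 < r) (a b : E) :
    volume (thickening r (segment ℝ a b)) = ENNReal.ofReal (π * r ^ 2 + 2 * r * ‖a - b‖) := by
  rw [volume_thickening_segment_eq_volume_stadium hE hr.le,
    volume_stadium_eq_add hr (norm_nonneg _), volume_stadium_zero hE hr.le,
    ← ENNReal.ofReal_add (by positivity) (by positivity), norm_sub_rev]

end Plane

open ProbabilityTheory in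
lemma cond_compl_of_subset {α : Type*} [MeasurableSpace α] (μ : Measure α) {S T : Set α}
    (hT : MeasurableSet T) (hTS : T ⊆ S) (hS : μ S ≠ ∞) :
    μ[Tᶜ|S] = ENNReal.ofReal (((μ S).toReal - (μ T).toReal) / (μ S).toReal) := by
  have hTS' : μ T ≤ μ S := measure_mono hTS
  have hfin : (μ S - μ T) / μ S ≠ ∞ :=
    ne_top_of_le_ne_top ENNReal.one_ne_top
      ((ENNReal.div_le_div_right tsub_le_self _).trans ENNReal.div_self_le_one)
  rw [cond_apply' hT.compl, ← sdiff_eq,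
    measure_sdiff hTS hT.nullMeasurableSet (ne_top_of_le_ne_top hS hTS'),
    ← ENNReal.div_eq_inv_mul, ← ENNReal.toReal_sub_of_le hTS' hS, ← ENNReal.toReal_div,
    ENNReal.ofReal_toReal hfin]

theorem clearance_probability_general (S : Set (EuclideanSpace ℝ (Fin 2)))
    (hStop : volume S < ⊤)
    (a b : EuclideanSpace ℝ (Fin 2)) (r : ℝ) (hr : 0 < r)
    (hsub : Metric.thickening r (segment ℝ a b) ⊆ S)
    (N : ℕ) :
    Measure.pi (fun _ : Fin N => (volume S)⁻¹ • volume.restrict S)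
        {ω : Fin N → EuclideanSpace ℝ (Fin 2) |
          ∀ j, r ≤ Metric.infDist (ω j) (segment ℝ a b)}
      = ENNReal.ofReal
          (((volume S).toReal - π * r ^ 2 - 2 * r * ‖a - b‖) / (volume S).toReal) ^ N := by
  have hevent : {ω : Fin N → EuclideanSpace ℝ (Fin 2) | ∀ j, r ≤ infDist (ω j) (segment ℝ a b)}
      = univ.pi fun _ => (thickening r (segment ℝ a b))ᶜ := by
    ext ω
    simp [mem_thickening_iff_infDist_lt ⟨a, left_mem_segment ℝ a b⟩]
  rw [← ProbabilityTheory.cond, hevent, Measure.pi_pi, Finset.prod_const, Finset.card_univ,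
    Fintype.card_fin, cond_compl_of_subset volume isOpen_thickening.measurableSet hsub hStop.ne,
    volume_thickening_segment finrank_euclideanSpace_fin hr, ENNReal.toReal_ofReal (by positivity),
    sub_add_eq_sub_sub]

/-- Conditional clearance probability: if `N` obstacle centers are drawn i.i.d. from the
uniform distribution on a set `S ⊆ ℝ²` of finite positive area containing the open
`r`-thickening of the segment `[a,b]`, then the probability that every center is at
distance at least `r` from the segment equals
`((μ(S) − π r² − 2 r ‖a − b‖)/μ(S))^N`. -/
theorem clearance_probability (S : Set (EuclideanSpace ℝ (Fin 2))) (hS : MeasurableSet S)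
    (hS0 : 0 < volume S) (hStop : volume S < ⊤)
    (a b : EuclideanSpace ℝ (Fin 2)) (r : ℝ) (hr : 0 < r)
    (hsub : Metric.thickening r (segment ℝ a b) ⊆ S)
    (N : ℕ) (hN : 0 < N) :
    Measure.pi (fun _ : Fin N => (volume S)⁻¹ • volume.restrict S)
        {ω : Fin N → EuclideanSpace ℝ (Fin 2) |
          ∀ j, r ≤ Metric.infDist (ω j) (segment ℝ a b)}
      = ENNReal.ofReal
          (((volume S).toReal - π * r ^ 2 - 2 * r * ‖a - b‖) / (volume S).toReal) ^ N :=
  clearance_probability_general S hStop a b r hr hsub N
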